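/- In the construction where T' is a complete binary tree with n−1 levels, and for each leaf u of T' two children v, w are added with the full branch ending at v being a hyperedge, a complete binary tree S with n−2 levels attached at w, and for each leaf u' of S two children v', w' added with the path from u to v' being a hyperedge and a complete binary tree S' with n−1 levels attached at w' with each path from u' to a leaf of S' being a hyperedge: any hyperedge starting at the root intersects exactly 2^(n-2) + 2^(n-3) − 1 other hyperedges. -/
import Mathlib


/-- The finset of all boolean lists of length `k` (nodes on level `k` of the
complete infinite rooted binary tree). -/
def listsOfLen : ℕ → Finset (List Bool)
  | 0 => {[]}
  | k+1 => (listsOfLen k).image (· ++ [true]) ∪ (listsOfLen k).image (· ++ [false])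

/-- The vertex set of the full branch (root-to-`l` path) ending at the node `l`. -/
def prefixesF (l : List Bool) : Finset (List Bool) :=
  (Finset.range (l.length + 1)).image (fun i => l.take i)

/-- The vertex set of the level-descending path starting at node `p` and
ending at node `p ++ q`. -/
def pathFinset (p q : List Bool) : Finset (List Bool) :=
  (Finset.range (q.length + 1)).image (fun i => p ++ q.take i)

/-- `S` is (the node set of) a rooted binary tree: it contains the root, is
prefix-closed, and every node has either zero or two children. -/
def IsBinTree (S : Finset (List Bool)) : Prop :=
  [] ∈ S ∧ (∀ l ∈ S, ∀ p : List Bool, p <+: l → p ∈ S) ∧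
    ∀ l ∈ S, ((l ++ [true]) ∈ S ↔ (l ++ [false]) ∈ S)

/-- `l` is a leaf of the tree `S`. -/
def IsLeaf (S : Finset (List Bool)) (l : List Bool) : Prop :=
  l ∈ S ∧ (l ++ [true]) ∉ S ∧ (l ++ [false]) ∉ S

/-- The edge `e` is a level-descending path inside the tree `S`. -/
def InTree (S : Finset (List Bool)) (e : Finset (List Bool)) : Prop :=
  ∃ p q : List Bool, (p ++ q) ∈ S ∧ e = pathFinset p q

/-- Hyperedges starting at the root: for each leaf `u` of `T'` (level `n-2`),
the full branch ending at `v = u ++ [false]`. -/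
def edgesA (n : ℕ) : Finset (Finset (List Bool)) :=
  (listsOfLen (n - 2)).image fun u => prefixesF (u ++ [false])

/-- Hyperedges from a leaf `u` of `T'` down through `w = u ++ [true]` and the
attached tree `S` to a child `v'` of a leaf `u'` of `S`. -/
def edgesB (n : ℕ) : Finset (Finset (List Bool)) :=
  ((listsOfLen (n - 2)) ×ˢ (listsOfLen (n - 3))).image fun p =>
    pathFinset p.1 ([true] ++ p.2 ++ [false])

/-- Hyperedges from a leaf `u'` of `S` down through `w' = u' ++ [true]` and the
attached tree `S'` to one of its leaves. -/
def edgesC (n : ℕ) : Finset (Finset (List Bool)) :=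
  (((listsOfLen (n - 2)) ×ˢ (listsOfLen (n - 3))) ×ˢ (listsOfLen (n - 2))).image
    fun p => pathFinset (p.1.1 ++ [true] ++ p.1.2) ([true] ++ p.2)

/-- The hyperedge set of the counterexample construction. -/
def edgesH (n : ℕ) : Finset (Finset (List Bool)) := edgesA n ∪ edgesB n ∪ edgesC n

lemma mem_pathFinset {p q x : List Bool} :
    x ∈ pathFinset p q ↔ p <+: x ∧ x <+: p ++ q := by
  simp only [pathFinset, Finset.mem_image, Finset.mem_range]
  constructor
  · rintro ⟨i, hi, rfl⟩
    exact ⟨List.prefix_append _ _, (List.prefix_append_right_inj p).2 (List.take_prefix _ _)⟩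
  · rintro ⟨⟨t, rfl⟩, h2⟩
    have ht : t <+: q := (List.prefix_append_right_inj p).1 h2
    exact ⟨t.length, Nat.lt_succ_of_le ht.length_le, by rw [← List.prefix_iff_eq_take.1 ht]⟩

lemma mem_prefixesF {l x : List Bool} : x ∈ prefixesF l ↔ x <+: l := by
  simp only [prefixesF, Finset.mem_image, Finset.mem_range]
  constructor
  · rintro ⟨i, hi, rfl⟩
    exact List.take_prefix _ _
  · intro h
    exact ⟨x.length, Nat.lt_succ_of_le h.length_le, (List.prefix_iff_eq_take.1 h).symm⟩

lemma mem_listsOfLen : ∀ {k : ℕ} {l : List Bool}, l ∈ listsOfLen k ↔ l.length = k := by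
  intro k
  induction k with
  | zero => intro l; simp [listsOfLen, List.length_eq_zero_iff]
  | succ k ih =>
    intro l
    simp only [listsOfLen, Finset.mem_union, Finset.mem_image]
    constructor
    · rintro (⟨m, hm, rfl⟩ | ⟨m, hm, rfl⟩) <;> simp [ih.1 hm]
    · intro hl
      rcases l.eq_nil_or_concat with rfl | ⟨m, b, rfl⟩
      · simp at hl
      · have hm : m.length = k := by simpa using hl
        cases b
        · right; exact ⟨m, ih.2 hm, by simp⟩
        · left; exact ⟨m, ih.2 hm, by simp⟩

lemma card_listsOfLen (k : ℕ) : (listsOfLen k).card = 2 ^ k := by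
  induction k with
  | zero => simp [listsOfLen]
  | succ k ih =>
    have hinj : ∀ b : Bool, Function.Injective (fun l : List Bool => l ++ [b]) := by
      intro b a c h; simpa using h
    rw [listsOfLen, Finset.card_union_of_disjoint, Finset.card_image_of_injective _ (hinj true),
      Finset.card_image_of_injective _ (hinj false), ih]
    · ring
    · rw [Finset.disjoint_left]
      rintro f hf hg
      simp only [Finset.mem_image] at hf hg
      obtain ⟨a, -, rfl⟩ := hf
      obtain ⟨c, -, hc⟩ := hg
      have := (List.append_inj' hc rfl).2
      simp at this
/-- In the counterexample construction, every hyperedge starting at the root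
intersects exactly `2^(n-2) + 2^(n-3) - 1` other hyperedges. -/
theorem root_edge_neighborhood (n : ℕ) (hn : 3 ≤ n) (e : Finset (List Bool))
    (he : e ∈ edgesA n) :
    ((edgesH n).filter fun f => f ≠ e ∧ (e ∩ f).Nonempty).card
      = 2 ^ (n - 2) + 2 ^ (n - 3) - 1 := by
  rw [edgesA, Finset.mem_image] at he
  obtain ⟨u, hu, rfl⟩ := he
  have hul : u.length = n - 2 := mem_listsOfLen.1 hu
  have hne : u ≠ [] := by
    intro h; rw [h] at hul; simp at hul; omega
  set e := prefixesF (u ++ [false]) with hedef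
  have hnilE : ([] : List Bool) ∈ e := mem_prefixesF.2 (List.nil_prefix)
  -- the image part (edges of type B through u)
  set B : Finset (Finset (List Bool)) :=
    (listsOfLen (n - 3)).image (fun q => pathFinset u ([true] ++ q ++ [false])) with hBdef
  have hnilB : ∀ f ∈ B, ([] : List Bool) ∉ f := by
    intro f hf
    rw [hBdef, Finset.mem_image] at hf
    obtain ⟨q, -, rfl⟩ := hf
    intro hmem
    exact hne (List.prefix_nil.1 (mem_pathFinset.1 hmem).1)
  have key : (edgesH n).filter (fun f => f ≠ e ∧ (e ∩ f).Nonempty)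
      = (edgesA n).erase e ∪ B := by
    ext f
    simp only [Finset.mem_filter, Finset.mem_union, Finset.mem_erase]
    constructor
    · rintro ⟨hf, hfe, x, hx⟩
      rw [Finset.mem_inter] at hx
      obtain ⟨hxe, hxf⟩ := hx
      have hxpre : x <+: u ++ [false] := mem_prefixesF.1 hxe
      rw [edgesH, Finset.mem_union, Finset.mem_union] at hf
      rcases hf with (hf | hf) | hf
      · exact Or.inl ⟨hfe, hf⟩
      · right
        rw [edgesB, Finset.mem_image] at hf
        obtain ⟨⟨p, q⟩, hpq, rfl⟩ := hf
        rw [Finset.mem_product] at hpq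
        have hpl : p.length = n - 2 := mem_listsOfLen.1 hpq.1
        have hpx : p <+: x := (mem_pathFinset.1 hxf).1
        have hpu : p <+: u ++ [false] := hpx.trans hxpre
        have : p = u := by
          have h1 : p <+: u :=
            List.prefix_of_prefix_length_le hpu (List.prefix_append u [false])
              (by simp [hpl, hul])
          exact h1.eq_of_length (by simp [hpl, hul])
        subst this
        rw [hBdef, Finset.mem_image]
        exact ⟨q, hpq.2, rfl⟩
      · exfalso
        rw [edgesC, Finset.mem_image] at hf
        obtain ⟨⟨⟨a, b⟩, c⟩, habc, rfl⟩ := hf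
        simp only [Finset.mem_product] at habc
        have hal : a.length = n - 2 := mem_listsOfLen.1 habc.1.1
        have hbl : b.length = n - 3 := mem_listsOfLen.1 habc.1.2
        have hax : a ++ [true] ++ b <+: x := (mem_pathFinset.1 hxf).1
        have hau : a ++ [true] ++ b <+: u ++ [false] := hax.trans hxpre
        have hlen := hau.length_le
        simp only [List.length_append, List.length_cons, List.length_nil, hal, hbl, hul] at hlen
        have hn3 : n = 3 := by omega
        have hb : b = [] := List.length_eq_zero_iff.1 (by omega)
        subst hb
        rw [List.append_nil] at hau
        have : a ++ [true] = u ++ [false] :=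
          hau.eq_of_length (by simp [hal, hul])
        have := (List.append_inj' this rfl).2
        simp at this
    · rintro (⟨hfe, hf⟩ | hf)
      · refine ⟨?_, hfe, ⟨[], ?_⟩⟩
        · rw [edgesH]; simp [hf]
        · rw [Finset.mem_inter]
          refine ⟨hnilE, ?_⟩
          rw [edgesA, Finset.mem_image] at hf
          obtain ⟨u', -, rfl⟩ := hf
          exact mem_prefixesF.2 (List.nil_prefix)
      · refine ⟨?_, ?_, ⟨u, ?_⟩⟩
        · rw [edgesH, Finset.mem_union, Finset.mem_union]
          left; right
          rw [hBdef, Finset.mem_image] at hf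
          obtain ⟨q, hq, rfl⟩ := hf
          rw [edgesB, Finset.mem_image]
          exact ⟨(u, q), Finset.mem_product.2 ⟨hu, hq⟩, rfl⟩
        · intro h; exact hnilB _ hf (h ▸ hnilE)
        · rw [Finset.mem_inter]
          refine ⟨mem_prefixesF.2 (List.prefix_append u [false]), ?_⟩
          rw [hBdef, Finset.mem_image] at hf
          obtain ⟨q, -, rfl⟩ := hf
          exact mem_pathFinset.2 ⟨List.prefix_rfl, List.prefix_append _ _⟩
  rw [key, Finset.card_union_of_disjoint, Finset.card_erase_of_mem]
  · have hA : (edgesA n).card = 2 ^ (n - 2) := by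
      rw [edgesA, Finset.card_image_of_injOn, card_listsOfLen]
      intro u₁ h₁ u₂ h₂ h
      dsimp only at h
      have h₁l := mem_listsOfLen.1 h₁
      have h₂l := mem_listsOfLen.1 h₂
      have : u₁ ++ [false] ∈ prefixesF (u₂ ++ [false]) := by
        rw [← h]; exact mem_prefixesF.2 List.prefix_rfl
      have := (mem_prefixesF.1 this).eq_of_length (by simp [h₁l, h₂l])
      simpa using this
    have hB : B.card = 2 ^ (n - 3) := by
      rw [hBdef, Finset.card_image_of_injOn, card_listsOfLen]
      intro q₁ h₁ q₂ h₂ h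
      dsimp only at h
      have h₁l := mem_listsOfLen.1 h₁
      have h₂l := mem_listsOfLen.1 h₂
      have : u ++ ([true] ++ q₁ ++ [false]) ∈ pathFinset u ([true] ++ q₂ ++ [false]) := by
        rw [← h]; exact mem_pathFinset.2 ⟨List.prefix_append _ _, List.prefix_rfl⟩
      have heq := (mem_pathFinset.1 this).2.eq_of_length (by simp [h₁l, h₂l])
      have h2 := List.append_cancel_left heq
      have := (List.append_inj' h2 rfl).1
      exact List.append_cancel_left this
    rw [hA, hB]
    have : 1 ≤ 2 ^ (n - 2) := Nat.one_le_two_pow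
    omega
  · rw [edgesA, Finset.mem_image]; exact ⟨u, hu, rfl⟩
  · rw [Finset.disjoint_left]
    intro f hf hfB
    have hf' := (Finset.mem_erase.1 hf).2
    rw [edgesA, Finset.mem_image] at hf'
    obtain ⟨u', -, rfl⟩ := hf'
    exact hnilB _ hfB (mem_prefixesF.2 (List.nil_prefix))
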